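/- arXiv:1907.10504 — 2 statements merged into one kernel-verified Lean document; each statement's English description precedes it below -/
import Mathlib

section
/- Let M be an orbit-finite monoid acting on the right on a set Q containing a distinguished element ⊥ with ⊥·m = ⊥ for all m ∈ M. For every smooth sequence x₁, …, x_k of elements of M and every q ∈ Q, q is compatible with x₁ if and only if q is compatible with the product x₁·x₂⋯x_k. -/
/-- Atoms: a fixed countably infinite set. -/
abbrev Atom : Type := ℕ

/-- Atom automorphisms: bijections of the atoms. -/
abbrev AtomPerm : Type := Equiv.Perm Atom

/-- `x` (in a set with atoms `X`) is supported by the finite set `A` of atoms. -/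
def SupportedBy {X : Type*} [MulAction AtomPerm X] (A : Finset Atom) (x : X) : Prop :=
  ∀ π : AtomPerm, (∀ a ∈ A, π a = a) → π • x = x

def FinitelySupported {X : Type*} [MulAction AtomPerm X] (x : X) : Prop :=
  ∃ A : Finset Atom, SupportedBy A x

def IsLeastSupport {X : Type*} [MulAction AtomPerm X] (A : Finset Atom) (x : X) : Prop :=
  SupportedBy A x ∧ ∀ B : Finset Atom, SupportedBy B x → A ⊆ B

/-- A function `f : X → Y` is supported by `A` if `f (π • x) = π • f x`
for every `A`-automorphism `π`. -/
def FunSupportedBy {X Y : Type*} [MulAction AtomPerm X] [MulAction AtomPerm Y]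
    (A : Finset Atom) (f : X → Y) : Prop :=
  ∀ π : AtomPerm, (∀ a ∈ A, π a = a) → ∀ x : X, f (π • x) = π • f x

/-- A function is equivariant if it commutes with all atom automorphisms. -/
def FunEquivariant {X Y : Type*} [MulAction AtomPerm X] [MulAction AtomPerm Y]
    (f : X → Y) : Prop :=
  ∀ (π : AtomPerm) (x : X), f (π • x) = π • f x

/-- A subset `S` of a set with atoms is supported by `A`
(as an element of the powerset with the induced action). -/
def SetSupportedBy {Z : Type*} [MulAction AtomPerm Z] (A : Finset Atom) (S : Set Z) : Prop :=
  ∀ π : AtomPerm, (∀ a ∈ A, π a = a) → ∀ z : Z, z ∈ S ↔ π • z ∈ S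

/-- A set with atoms is orbit-finite if every element is finitely supported and, for some
finite set `A` of atoms, it is a union of finitely many orbits of the group of
`A`-automorphisms. -/
def OrbitFinite (X : Type*) [MulAction AtomPerm X] : Prop :=
  (∀ x : X, FinitelySupported x) ∧
  ∃ (A : Finset Atom) (reps : Finset X),
    ∀ x : X, ∃ r ∈ reps, ∃ π : AtomPerm, (∀ a ∈ A, π a = a) ∧ π • r = x

/-- The multiplication of a monoid with atoms is finitely supported. -/
def MulFinitelySupported (M : Type*) [Monoid M] [MulAction AtomPerm M] : Prop :=
  ∃ A : Finset Atom, ∀ π : AtomPerm, (∀ a ∈ A, π a = a) →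
    ∀ x y : M, π • (x * y) = (π • x) * (π • y)

/-- An orbit-finite monoid: the underlying set is orbit-finite and
multiplication is finitely supported. -/
def OrbitFiniteMonoid (M : Type*) [Monoid M] [MulAction AtomPerm M] : Prop :=
  OrbitFinite M ∧ MulFinitelySupported M

/-- `x` is an infix of `y`. -/
def MInfix {M : Type*} [Monoid M] (x y : M) : Prop := ∃ a b : M, y = a * x * b

/-- `x` is a prefix of `y`. -/
def MPrefix {M : Type*} [Monoid M] (x y : M) : Prop := ∃ a : M, y = x * a

/-- `x` is a suffix of `y`. -/
def MSuffix {M : Type*} [Monoid M] (x y : M) : Prop := ∃ a : M, y = a * x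

def JEquiv {M : Type*} [Monoid M] (x y : M) : Prop := MInfix x y ∧ MInfix y x
def REquiv {M : Type*} [Monoid M] (x y : M) : Prop := MPrefix x y ∧ MPrefix y x
def LEquiv {M : Type*} [Monoid M] (x y : M) : Prop := MSuffix x y ∧ MSuffix y x

/-- A sequence of monoid elements is smooth if every element of the sequence can be
recovered from the product of the whole sequence by multiplying on both sides. -/
def SmoothSeq {M : Type*} [Monoid M] (l : List M) : Prop :=
  ∀ x ∈ l, ∃ y z : M, y * l.prod * z = x

/-!
Write the smooth sequence as `x :: rest` and put `w = rest.prod`. Smoothness gives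
`x = y * (x * w) * z`; iterating, `x = yⁿ * x * tⁿ` for `t = w * z` and every `n`. In an
orbit-finite monoid all powers of `t` are supported by one finite set of atoms, and only finitely
many elements are supported by a given finite set, so `tᵐ = tᵐ⁺ᶜ` for some `c > 0`. Hence
`x = x * tᶜ = (x * w) * (z * tᶜ⁻¹)`: the elements `x` and `x * w` are `R`-equivalent, and
`R`-equivalent elements are compatible with the same states.
-/

theorem exists_perm_fixing_mapsTo {α : Type*} [DecidableEq α] {B D F : Finset α}
    (hBD : Disjoint B D) (hBF : Disjoint B F) (hcard : D.card ≤ F.card) :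
    ∃ ρ : Equiv.Perm α, (∀ b ∈ B, ρ b = b) ∧ Set.MapsTo ρ D F := by
  obtain ⟨e⟩ : Nonempty (D ↪ F) := Function.Embedding.nonempty_of_card_le (by simpa using hcard)
  let f : D → {a // a ∉ B} := fun d => ⟨d, Finset.disjoint_right.mp hBD d.2⟩
  let g : D → {a // a ∉ B} := fun d => ⟨e d, Finset.disjoint_right.mp hBF (e d).2⟩
  obtain ⟨σ, hσ⟩ := Equiv.Perm.exists_extending_pair f g
    (fun d d' h => Subtype.ext (by simpa [f] using h))
    (fun d d' h => e.injective (Subtype.ext (by simpa [g] using h)))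
  refine ⟨Equiv.Perm.ofSubtype σ,
    fun b hb => Equiv.Perm.ofSubtype_apply_of_not_mem σ (not_not.mpr hb), fun d hd => ?_⟩
  rw [Equiv.Perm.ofSubtype_apply_of_mem σ (Finset.disjoint_right.mp hBD hd)]
  exact congrArg Subtype.val (hσ ⟨d, hd⟩) ▸ (e ⟨d, hd⟩).2

section SetsWithAtoms

variable {X : Type*} [MulAction AtomPerm X] {C : Finset Atom} {r : X}

theorem SupportedBy.smul_eq_smul_of_eqOn (hC : SupportedBy C r) {π τ : AtomPerm}
    (h : ∀ c ∈ C, π c = τ c) : π • r = τ • r := by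
  have hfix : (τ⁻¹ * π) • r = r := hC _ fun c hc => by simp [h c hc]
  calc π • r = τ • (τ⁻¹ * π) • r := by rw [smul_smul, mul_inv_cancel_left]
    _ = τ • r := by rw [hfix]

theorem SupportedBy.finite_smul_of_mapsTo (hC : SupportedBy C r) (E : Finset Atom) :
    {x : X | ∃ τ : AtomPerm, Set.MapsTo τ C E ∧ τ • r = x}.Finite := by
  classical
  let restrict : {τ : AtomPerm // Set.MapsTo τ C E} → C → E := fun τ c => ⟨τ.1 c, τ.2 c.2⟩
  have hfactor : Function.FactorsThrough (fun τ => τ.1 • r) restrict := fun τ τ' h =>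
    hC.smul_eq_smul_of_eqOn fun c hc => congrArg Subtype.val (congrFun h ⟨c, hc⟩)
  refine (Set.finite_range (Function.extend restrict (fun τ => τ.1 • r) fun _ => r)).subset ?_
  rintro _ ⟨τ, hτ, rfl⟩
  exact ⟨restrict ⟨τ, hτ⟩, hfactor.extend_apply _ _⟩

/-- Moving the atoms of the support of `r` that land outside `B` into one fixed set `F` of fresh
atoms does not change an element supported by `B`. -/
theorem SupportedBy.finite_supportedBy_smul (hC : SupportedBy C r) (B : Finset Atom) :
    {x : X | SupportedBy B x ∧ ∃ π : AtomPerm, π • r = x}.Finite := by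
  classical
  obtain ⟨F, hFB, hFcard⟩ := B.finite_toSet.infinite_compl.exists_subset_card_eq C.card
  refine (hC.finite_smul_of_mapsTo (B ∪ F)).subset ?_
  rintro _ ⟨hB, π, rfl⟩
  have hcard : (C.image π \ B).card ≤ F.card :=
    hFcard ▸ (Finset.card_le_card Finset.sdiff_subset).trans Finset.card_image_le
  obtain ⟨ρ, hρB, hρF⟩ := exists_perm_fixing_mapsTo Finset.disjoint_sdiff
    (Finset.disjoint_left.mpr fun a ha haF => hFB haF ha) hcard
  refine ⟨ρ * π, fun c hc => ?_, by rw [mul_smul, hB ρ hρB]⟩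
  by_cases hπc : π c ∈ B
  · simp [hρB _ hπc, hπc]
  · exact Finset.mem_union_right _
      (hρF (Finset.mem_sdiff.mpr ⟨Finset.mem_image_of_mem π hc, hπc⟩))

theorem OrbitFinite.finite_supportedBy (hX : OrbitFinite X) (B : Finset Atom) :
    {x : X | SupportedBy B x}.Finite := by
  obtain ⟨hfs, _, reps, horbit⟩ := hX
  have hcover : {x : X | SupportedBy B x} ⊆
      ⋃ r ∈ (reps : Set X), {x | SupportedBy B x ∧ ∃ π : AtomPerm, π • r = x} := by
    intro x hx
    obtain ⟨r, hr, π, -, rfl⟩ := horbit x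
    exact Set.mem_biUnion hr ⟨hx, π, rfl⟩
  refine (reps.finite_toSet.biUnion fun r _ => ?_).subset hcover
  obtain ⟨C, hC⟩ := hfs r
  exact hC.finite_supportedBy_smul B

end SetsWithAtoms

theorem MulFinitelySupported.exists_supportedBy_pow {M : Type*} [Monoid M]
    [MulAction AtomPerm M] (hmul : MulFinitelySupported M) {t : M} (ht : FinitelySupported t) :
    ∃ B : Finset Atom, ∀ n : ℕ, SupportedBy B (t ^ n) := by
  obtain ⟨A, hA⟩ := hmul
  obtain ⟨At, hAt⟩ := ht
  refine ⟨A ∪ At, fun n π hπ => ?_⟩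
  have hπA : ∀ a ∈ A, π a = a := fun a ha => hπ a (Finset.mem_union_left _ ha)
  induction n with
  | zero =>
    have h := hA π hπA (π⁻¹ • 1) 1
    rw [mul_one, smul_inv_smul, one_mul] at h
    rw [pow_zero]
    exact h.symm
  | succ n ih =>
    rw [pow_succ, hA π hπA, ih, hAt π fun a ha => hπ a (Finset.mem_union_right _ ha)]

theorem OrbitFiniteMonoid.exists_lt_pow_eq_pow {M : Type*} [Monoid M] [MulAction AtomPerm M]
    (hM : OrbitFiniteMonoid M) (t : M) : ∃ m n : ℕ, m < n ∧ t ^ m = t ^ n := by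
  obtain ⟨B, hB⟩ := hM.2.exists_supportedBy_pow (hM.1.1 t)
  exact (hM.1.finite_supportedBy B).exists_lt_map_eq_of_forall_mem hB

section Monoid

variable {M : Type*} [Monoid M]

theorem pow_mul_mul_pow_eq_of_mul_mul_eq {a x t : M} (h : a * x * t = x) (n : ℕ) :
    a ^ n * x * t ^ n = x := by
  induction n with
  | zero => simp
  | succ n ih =>
    calc a ^ (n + 1) * x * t ^ (n + 1) = a ^ n * (a * x * t) * t ^ n := by
          rw [pow_succ a, pow_succ' t]; simp only [mul_assoc]
      _ = x := by rw [h, ih]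

/-- Stability of monoids whose elements have eventually periodic powers. -/
theorem mPrefix_mul_of_mInfix_mul (hper : ∀ t : M, ∃ m n : ℕ, m < n ∧ t ^ m = t ^ n)
    {x w : M} (h : MInfix (x * w) x) : MPrefix (x * w) x := by
  obtain ⟨a, b, hab⟩ := h
  obtain ⟨m, n, hmn, hpow⟩ := hper (w * b)
  obtain ⟨c, rfl⟩ := Nat.exists_eq_add_of_lt hmn
  have hloop : a * x * (w * b) = x :=
    (by simp only [mul_assoc] : a * x * (w * b) = a * (x * w) * b).trans hab.symm
  have hiter := pow_mul_mul_pow_eq_of_mul_mul_eq hloop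
  refine ⟨b * (w * b) ^ c, ?_⟩
  calc x = a ^ m * x * (w * b) ^ (m + c + 1) := by rw [← hpow, hiter]
    _ = a ^ m * x * (w * b) ^ m * (w * b) ^ (c + 1) := by rw [add_assoc, pow_add, ← mul_assoc]
    _ = x * w * (b * (w * b) ^ c) := by rw [hiter, pow_succ', mul_assoc, mul_assoc]

end Monoid

theorem act_ne_bot_iff_of_rEquiv {M Q : Type*} [Monoid M] (act : Q → M → Q) (bot : Q)
    (hmul : ∀ (q : Q) (m n : M), act q (m * n) = act (act q m) n)
    (hbot : ∀ m : M, act bot m = bot) {x x' : M} (h : REquiv x x') (q : Q) :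
    act q x ≠ bot ↔ act q x' ≠ bot := by
  have hprefix : ∀ {u v : M}, MPrefix u v → act q u = bot → act q v = bot := by
    rintro u _ ⟨a, rfl⟩ hu
    rw [hmul, hu, hbot]
  exact not_congr ⟨hprefix h.1, hprefix h.2⟩

theorem smooth_compatibility_general {M : Type*} [Monoid M] [MulAction AtomPerm M]
    (hM : OrbitFiniteMonoid M) {Q : Type*}
    (act : Q → M → Q) (bot : Q)
    (hmul : ∀ (q : Q) (m n : M), act q (m * n) = act (act q m) n)
    (hbot : ∀ m : M, act bot m = bot)
    (l : List M) (hne : l ≠ []) (hsm : SmoothSeq l) :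
    ∀ q : Q, act q (l.head hne) ≠ bot ↔ act q l.prod ≠ bot := by
  obtain ⟨x, rest, rfl⟩ := List.exists_cons_of_ne_nil hne
  obtain ⟨y, z, hyz⟩ := hsm x List.mem_cons_self
  have hinfix : MInfix (x * rest.prod) x := ⟨y, z, by simpa using hyz.symm⟩
  have hR : REquiv x (x * rest.prod) :=
    ⟨⟨rest.prod, rfl⟩, mPrefix_mul_of_mInfix_mul hM.exists_lt_pow_eq_pow hinfix⟩
  simpa using act_ne_bot_iff_of_rEquiv act bot hmul hbot hR

/-- For an orbit-finite monoid right-acting on a set `Q` with absorbing element `⊥`, and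
every smooth sequence `x₁, …, x_k`, an element `q ∈ Q` is compatible with `x₁` if and
only if it is compatible with the product `x₁⋯x_k`. -/
theorem smooth_compatibility {M : Type*} [Monoid M] [MulAction AtomPerm M]
    (hM : OrbitFiniteMonoid M) {Q : Type*}
    (act : Q → M → Q) (bot : Q)
    (hone : ∀ q : Q, act q 1 = q)
    (hmul : ∀ (q : Q) (m n : M), act q (m * n) = act (act q m) n)
    (hbot : ∀ m : M, act bot m = bot)
    (l : List M) (hne : l ≠ []) (hsm : SmoothSeq l) :
    ∀ q : Q, act q (l.head hne) ≠ bot ↔ act q l.prod ≠ bot :=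
  smooth_compatibility_general hM act bot hmul hbot l hne hsm
end

section
/- Let M be an orbit-finite monoid acting on the right on a set Q̄, and let Q→ ⊆ Q̄ be a subset such that every element of Q̄ outside Q→ is fixed by the action (q·m = q for all m ∈ M whenever q ∉ Q→). Then for every smooth sequence m₁, …, m_k of elements of M and every q ∈ Q̄: q·m₁ belongs to Q→ if and only if q·(m₁⋯m_k) belongs to Q→, and if q·m₁ ∉ Q→ then q·m₁ = q·(m₁⋯m_k). In particular, q·m₁ and q·(m₁⋯m_k) have the same type with respect to any classification that distinguishes the elements outside Q→. -/
/-!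
In an orbit-finite monoid the elements supported by a fixed finite set of atoms form a finite
set, so the powers of any `w` (all supported by the supports of `w` and of the multiplication)
repeat: `w ^ (a + p) = w ^ a` with `p > 0`. Hence `x = y * x * w` forces `x = x * w ^ p`, and a
prefix of `z` that is also an infix of `z` is `R`-equivalent to `z`. For a smooth sequence this
makes `m₁` and `m₁ ⋯ m_k` mutual prefixes; since states outside `Q→` are frozen by the
action, a right multiplication can never lead out of `Q→` and back.
-/

lemma SupportedBy.mono {X : Type*} [MulAction AtomPerm X] {A B : Finset Atom} {x : X}
    (hAB : A ⊆ B) (h : SupportedBy A x) : SupportedBy B x :=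
  fun π hπ => h π fun a ha => hπ a (hAB ha)

lemma exists_perm_fixing_of_forall_eq_iff (B C : Finset Atom) (π σ : AtomPerm)
    (h : ∀ c ∈ C, ∀ b ∈ B, π c = b ↔ σ c = b) :
    ∃ τ : AtomPerm, (∀ b ∈ B, τ b = b) ∧ ∀ c ∈ C, τ (π c) = σ c := by
  classical
  let g : Atom → Atom := fun a => if π.symm a ∈ C then σ (π.symm a) else a
  have hgB : ∀ b ∈ B, g b = b := by
    intro b hb
    by_cases hc : π.symm b ∈ C
    · simpa [g, hc] using (h _ hc b hb).1 (by simp)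
    · simp [g, hc]
  have hgC : ∀ c ∈ C, g (π c) = σ c := fun c hc => by simp [g, hc]
  set s : Set Atom := ↑B ∪ π '' ↑C
  have hinj : Set.InjOn g s := by
    rintro a₁ (h₁ | ⟨c₁, hc₁, rfl⟩) a₂ (h₂ | ⟨c₂, hc₂, rfl⟩) he
    · rwa [hgB _ h₁, hgB _ h₂] at he
    · rw [hgB _ h₁, hgC _ hc₂] at he
      exact ((h _ hc₂ _ h₁).2 he.symm).symm
    · rw [hgC _ hc₁, hgB _ h₂] at he
      exact (h _ hc₁ _ h₂).2 he
    · rw [hgC _ hc₁, hgC _ hc₂] at he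
      rw [σ.injective he]
  have hs : Cardinal.mk s < Cardinal.mk Atom :=
    (Set.toFinite s).lt_aleph0.trans_eq Cardinal.mk_nat.symm
  obtain ⟨τ, hτ⟩ := Cardinal.extend_function_of_lt ⟨s.domRestrict g, hinj.injective⟩ hs
    ⟨Equiv.refl Atom⟩
  refine ⟨τ, fun b hb => ?_, fun c hc => ?_⟩
  · exact (hτ ⟨b, Or.inl hb⟩).trans (hgB b hb)
  · exact (hτ ⟨π c, Or.inr ⟨c, hc, rfl⟩⟩).trans (hgC c hc)

lemma SupportedBy.smul_eq_smul {X : Type*} [MulAction AtomPerm X] {B C : Finset Atom} {r : X}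
    {π σ : AtomPerm} (hr : SupportedBy C r) (hπr : SupportedBy B (π • r))
    (h : ∀ c ∈ C, ∀ b ∈ B, π c = b ↔ σ c = b) : π • r = σ • r := by
  obtain ⟨τ, hτB, hτC⟩ := exists_perm_fixing_of_forall_eq_iff B C π σ h
  have hfix : (σ⁻¹ * τ * π) • r = r :=
    hr _ fun c hc => by simp [Equiv.Perm.mul_apply, hτC c hc]
  calc π • r = τ • π • r := (hπr τ hτB).symm
    _ = σ • (σ⁻¹ * τ * π) • r := by simp [mul_smul]
    _ = σ • r := by rw [hfix]

lemma OrbitFinite.finite_setOf_supportedBy {X : Type*} [MulAction AtomPerm X]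
    (hX : OrbitFinite X) (B : Finset Atom) : {x : X | SupportedBy B x}.Finite := by
  obtain ⟨hfs, _, reps, hreps⟩ := hX
  choose supp hsupp using hfs
  choose r hr π _ hπr using hreps
  set C := reps.sup supp
  -- `x = π x • r x` is determined by `r x` and by which atoms of `B` the permutation `π x`
  -- sends the atoms of `C ⊇ supp (r x)` to.
  let code : X → reps × (C → B → Prop) := fun x => (⟨r x, hr x⟩, fun c b => π x c = b)
  refine Set.Finite.of_finite_image (f := code) (Set.toFinite _) fun x hx y hy hxy => ?_
  have hrxy : r x = r y := congrArg (Subtype.val ∘ Prod.fst) hxy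
  have hπxy : ∀ c ∈ C, ∀ b ∈ B, π x c = b ↔ π y c = b := fun c hc b hb =>
    (congrFun (congrFun (congrArg Prod.snd hxy) ⟨c, hc⟩) ⟨b, hb⟩).to_iff
  have hrC : SupportedBy C (r x) := (hsupp _).mono (Finset.le_sup (hr x))
  have hx' : SupportedBy B (π x • r x) := by rw [hπr]; exact hx
  calc x = π x • r x := (hπr x).symm
    _ = π y • r x := hrC.smul_eq_smul hx' hπxy
    _ = y := by rw [hrxy, hπr]

section Monoid

variable {M : Type*} [Monoid M] [MulAction AtomPerm M]

lemma MulFinitelySupported.exists_supportedBy_pow_succ (hmul : MulFinitelySupported M) {w : M}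
    (hw : FinitelySupported w) : ∃ B : Finset Atom, ∀ n : ℕ, SupportedBy B (w ^ (n + 1)) := by
  obtain ⟨A, hA⟩ := hmul
  obtain ⟨Aw, hAw⟩ := hw
  refine ⟨A ∪ Aw, fun n => ?_⟩
  induction n with
  | zero => simpa using hAw.mono Finset.subset_union_right
  | succ n ih =>
    intro π hπ
    rw [pow_succ, hA π fun a ha => hπ a (Finset.mem_union_left _ ha), ih π hπ,
      hAw π fun a ha => hπ a (Finset.mem_union_right _ ha)]

lemma OrbitFiniteMonoid.exists_pow_add_eq_pow (hM : OrbitFiniteMonoid M) (w : M) :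
    ∃ a p : ℕ, 0 < p ∧ w ^ (a + p) = w ^ a := by
  obtain ⟨B, hB⟩ := hM.2.exists_supportedBy_pow_succ (hM.1.1 w)
  obtain ⟨i, j, hij, he⟩ := (hM.1.finite_setOf_supportedBy B).exists_lt_map_eq_of_forall_mem hB
  exact ⟨i + 1, j - i, by omega, by rw [show i + 1 + (j - i) = j + 1 by omega, he]⟩

lemma OrbitFiniteMonoid.mPrefix_of_eq_mul_mul (hM : OrbitFiniteMonoid M) {x y w : M}
    (h : x = y * x * w) : MPrefix (x * w) x := by
  obtain ⟨a, p, hp, hap⟩ := hM.exists_pow_add_eq_pow w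
  have hk : ∀ k : ℕ, x = y ^ k * x * w ^ k := by
    intro k
    induction k with
    | zero => simp
    | succ k ih =>
      calc x = y * (y ^ k * x * w ^ k) * w := by rw [← ih, ← h]
        _ = y ^ (k + 1) * x * w ^ (k + 1) := by
          rw [pow_succ' y, pow_succ w]; simp only [mul_assoc]
  refine ⟨w ^ (p - 1), ?_⟩
  calc x = y ^ a * x * w ^ (a + p) := by rw [hap, ← hk a]
    _ = x * w ^ p := by rw [pow_add, ← mul_assoc, ← hk a]
    _ = x * w * w ^ (p - 1) := by rw [mul_assoc, ← pow_succ', Nat.sub_add_cancel hp]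

lemma OrbitFiniteMonoid.rEquiv_of_mPrefix_of_mInfix (hM : OrbitFiniteMonoid M) {x z : M}
    (hxz : MPrefix x z) (hzx : MInfix z x) : REquiv x z := by
  obtain ⟨t, rfl⟩ := hxz
  obtain ⟨y, u, hx⟩ := hzx
  have hx' : x = y * x * (t * u) := by simpa only [mul_assoc] using hx
  obtain ⟨s, hs⟩ := hM.mPrefix_of_eq_mul_mul hx'
  exact ⟨⟨t, rfl⟩, ⟨u * s, by simpa only [mul_assoc] using hs⟩⟩

lemma SmoothSeq.rEquiv_head_prod (hM : OrbitFiniteMonoid M) {l : List M} (hne : l ≠ [])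
    (hsm : SmoothSeq l) : REquiv (l.head hne) l.prod := by
  have hprod : l.prod = l.head hne * l.tail.prod := by
    rw [← List.prod_cons, List.cons_head_tail]
  obtain ⟨y, z, h⟩ := hsm _ (List.head_mem hne)
  exact hM.rEquiv_of_mPrefix_of_mInfix ⟨_, hprod⟩ ⟨y, z, h.symm⟩

end Monoid

lemma act_eq_of_mPrefix_of_act_notMem {M Q : Type*} [Monoid M] (act : Q → M → Q)
    (hmul : ∀ (q : Q) (m n : M), act q (m * n) = act (act q m) n)
    (S : Set Q) (hfix : ∀ q ∉ S, ∀ m : M, act q m = q) {m n : M} (hmn : MPrefix m n) {q : Q}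
    (hq : act q m ∉ S) : act q n = act q m := by
  obtain ⟨t, rfl⟩ := hmn
  rw [hmul, hfix _ hq]

lemma act_mem_iff_and_eq_of_rEquiv {M Q : Type*} [Monoid M] (act : Q → M → Q)
    (hmul : ∀ (q : Q) (m n : M), act q (m * n) = act (act q m) n)
    (S : Set Q) (hfix : ∀ q ∉ S, ∀ m : M, act q m = q) {m n : M} (hmn : REquiv m n) (q : Q) :
    (act q m ∈ S ↔ act q n ∈ S) ∧ (act q m ∉ S → act q m = act q n) := by
  have h₁ := act_eq_of_mPrefix_of_act_notMem act hmul S hfix hmn.1 (q := q)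
  have h₂ := act_eq_of_mPrefix_of_act_notMem act hmul S hfix hmn.2 (q := q)
  refine ⟨⟨fun h => ?_, fun h => ?_⟩, fun h => (h₁ h).symm⟩
  · by_contra h'
    exact h' (h₂ h' ▸ h)
  · by_contra h'
    exact h' (h₁ h' ▸ h)

theorem smooth_same_type_general {M : Type*} [Monoid M] [MulAction AtomPerm M]
    (hM : OrbitFiniteMonoid M) {Q : Type*}
    (act : Q → M → Q)
    (hmul : ∀ (q : Q) (m n : M), act q (m * n) = act (act q m) n)
    (Qright : Set Q) (hfix : ∀ q ∉ Qright, ∀ m : M, act q m = q)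
    (l : List M) (hne : l ≠ []) (hsm : SmoothSeq l) :
    ∀ q : Q,
      (act q (l.head hne) ∈ Qright ↔ act q l.prod ∈ Qright) ∧
      (act q (l.head hne) ∉ Qright → act q (l.head hne) = act q l.prod) :=
  act_mem_iff_and_eq_of_rEquiv act hmul Qright hfix (hsm.rEquiv_head_prod hM hne)

/-- Let an orbit-finite monoid act on the right on `Q̄`, and let `Q→ ⊆ Q̄` be such that all
elements outside `Q→` are fixed by the action. Then for every smooth sequence
`m₁, …, m_k` and every `q`: `q·m₁ ∈ Q→` iff `q·(m₁⋯m_k) ∈ Q→`, and if `q·m₁ ∉ Q→` then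
`q·m₁ = q·(m₁⋯m_k)`. -/
theorem smooth_same_type {M : Type*} [Monoid M] [MulAction AtomPerm M]
    (hM : OrbitFiniteMonoid M) {Q : Type*}
    (act : Q → M → Q)
    (hone : ∀ q : Q, act q 1 = q)
    (hmul : ∀ (q : Q) (m n : M), act q (m * n) = act (act q m) n)
    (Qright : Set Q) (hfix : ∀ q ∉ Qright, ∀ m : M, act q m = q)
    (l : List M) (hne : l ≠ []) (hsm : SmoothSeq l) :
    ∀ q : Q,
      (act q (l.head hne) ∈ Qright ↔ act q l.prod ∈ Qright) ∧
      (act q (l.head hne) ∉ Qright → act q (l.head hne) = act q l.prod) :=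
  smooth_same_type_general hM act hmul Qright hfix l hne hsm
end
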